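/- For 0 < q < 1 and all z ∈ ℝ, the series Σ_{n=0}^∞ q^{n(n-1)/2} z^n/(q;q)_n converges and equals ∏_{k=0}^∞ (1 + z q^k). -/

import Mathlib

open Finset Filter Topology

noncomputable def qPoch (q : ℝ) (m : ℕ) : ℝ := ∏ j ∈ Finset.range m, (1 - q ^ (j + 1))

/-- Tail of the q-exponential e(q;z) starting at index m; I_n(q;z) = qexpTail q z (n+1). -/
noncomputable def qexpTail (q z : ℝ) (m : ℕ) : ℝ := ∑' k : ℕ, z ^ (m + k) / qPoch q (m + k)

/-!
Write `E(z) = ∑ cₙ zⁿ` with `cₙ = q^(n(n-1)/2) / (q;q)ₙ`. The recursion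
`cₙ₊₁ (1 - qⁿ⁺¹) = qⁿ cₙ` gives both a ratio test showing that the series converges for
every `z`, and the functional equation `E(z) = (1 + z) E(qz)`. Iterating it,
`E(z) = ∏_{k<N} (1 + z qᵏ) · E(qᴺ z)`, and `E(qᴺ z) → E(0) = 1` by continuity.
-/

variable {q : ℝ}

theorem qPoch_succ (q : ℝ) (n : ℕ) : qPoch q (n + 1) = qPoch q n * (1 - q ^ (n + 1)) :=
  prod_range_succ _ n

theorem qPoch_pos (hq0 : 0 ≤ q) (hq1 : q < 1) (n : ℕ) : 0 < qPoch q n :=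
  prod_pos fun j _ => sub_pos.2 (pow_lt_one₀ hq0 hq1 j.succ_ne_zero)

/-- `n * (n - 1) / 2` is the triangular number: the division in `ℕ` is exact. -/
noncomputable def qExpCoeff (q : ℝ) (n : ℕ) : ℝ := q ^ (n * (n - 1) / 2) / qPoch q n

noncomputable def qExp (q z : ℝ) : ℝ := ∑' n, qExpCoeff q n * z ^ n

@[simp]
theorem qExpCoeff_zero (q : ℝ) : qExpCoeff q 0 = 1 := by
  simp [qExpCoeff, qPoch]

theorem qExpCoeff_nonneg (hq0 : 0 ≤ q) (hq1 : q < 1) (n : ℕ) : 0 ≤ qExpCoeff q n :=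
  div_nonneg (pow_nonneg hq0 _) (qPoch_pos hq0 hq1 n).le

theorem qExpCoeff_succ_mul {n : ℕ} (h : q ^ (n + 1) ≠ 1) :
    qExpCoeff q (n + 1) * (1 - q ^ (n + 1)) = q ^ n * qExpCoeff q n := by
  rw [qExpCoeff, qExpCoeff, qPoch_succ, Nat.triangle_succ, pow_add, div_mul_eq_div_div,
    div_mul_cancel₀ _ (sub_ne_zero.2 h.symm)]
  ring

theorem summable_qExpCoeff_mul_pow (hq0 : 0 ≤ q) (hq1 : q < 1) (z : ℝ) :
    Summable fun n => qExpCoeff q n * z ^ n := by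
  have hq : 0 < 1 - q := sub_pos.2 hq1
  have hsmall : ∀ᶠ n : ℕ in atTop, q ^ n * |z| ≤ (1 - q) / 2 := by
    have := (tendsto_pow_atTop_nhds_zero_of_lt_one hq0 hq1).mul_const |z|
    rw [zero_mul] at this
    exact this.eventually_le_const (by positivity)
  refine summable_of_ratio_norm_eventually_le (r := 1 / 2) (by norm_num) ?_
  filter_upwards [hsmall] with n hn
  have hc := qExpCoeff_nonneg hq0 hq1
  have hrec := qExpCoeff_succ_mul (pow_lt_one₀ hq0 hq1 n.succ_ne_zero).ne
  have hqn : q ^ (n + 1) ≤ q := pow_le_of_le_one hq0 hq1.le n.succ_ne_zero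
  rw [norm_mul, norm_mul, Real.norm_of_nonneg (hc _), Real.norm_of_nonneg (hc _), norm_pow,
    norm_pow, Real.norm_eq_abs, pow_succ]
  suffices qExpCoeff q (n + 1) * (1 - q) * |z| ≤ (1 - q) / 2 * qExpCoeff q n by
    have hzn := pow_nonneg (abs_nonneg z) n
    nlinarith [mul_le_mul_of_nonneg_right this hzn]
  calc qExpCoeff q (n + 1) * (1 - q) * |z|
      ≤ qExpCoeff q (n + 1) * (1 - q ^ (n + 1)) * |z| := by gcongr; exact hc _
    _ = q ^ n * |z| * qExpCoeff q n := by rw [hrec]; ring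
    _ ≤ (1 - q) / 2 * qExpCoeff q n := by gcongr; exact hc _

@[simp]
theorem qExp_zero (q : ℝ) : qExp q 0 = 1 := by
  rw [qExp, tsum_eq_single 0 fun n hn => by simp [hn]]
  simp

theorem continuous_qExp (hq0 : 0 ≤ q) (hq1 : q < 1) : Continuous (qExp q) := by
  refine continuous_iff_continuousAt.2 fun x => ?_
  refine tendsto_tsum_of_dominated_convergence
    (summable_qExpCoeff_mul_pow hq0 hq1 (|x| + 1))
    (fun n => ((continuous_pow n).const_mul _).tendsto x) ?_
  filter_upwards [Metric.ball_mem_nhds x one_pos] with y hy n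
  have hyx : |y| ≤ |x| + 1 := by
    have := abs_sub_abs_le_abs_sub y x
    rw [Metric.mem_ball, Real.dist_eq] at hy
    linarith
  rw [norm_mul, Real.norm_of_nonneg (qExpCoeff_nonneg hq0 hq1 n), norm_pow, Real.norm_eq_abs]
  gcongr
  exact qExpCoeff_nonneg hq0 hq1 n

theorem qExp_eq_one_add_mul_qExp (hq0 : 0 ≤ q) (hq1 : q < 1) (w : ℝ) :
    qExp q w = (1 + w) * qExp q (q * w) := by
  have hsum := summable_qExpCoeff_mul_pow hq0 hq1
  have hstep (n : ℕ) : qExpCoeff q (n + 1) * w ^ (n + 1) =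
      qExpCoeff q (n + 1) * (q * w) ^ (n + 1) + w * (qExpCoeff q n * (q * w) ^ n) := by
    linear_combination w ^ (n + 1) * qExpCoeff_succ_mul (pow_lt_one₀ hq0 hq1 n.succ_ne_zero).ne
  rw [qExp, qExp, (hsum w).tsum_eq_zero_add, (hsum (q * w)).tsum_eq_zero_add, tsum_congr hstep,
    ((summable_nat_add_iff 1).2 (hsum _)).tsum_add ((hsum _).mul_left w), tsum_mul_left,
    (hsum (q * w)).tsum_eq_zero_add]
  simp only [qExpCoeff_zero, pow_zero, mul_one]
  ring

theorem qExp_eq_prod_mul_qExp (hq0 : 0 ≤ q) (hq1 : q < 1) (z : ℝ) (N : ℕ) :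
    qExp q z = (∏ k ∈ range N, (1 + z * q ^ k)) * qExp q (q ^ N * z) := by
  induction N with
  | zero => simp
  | succ N ih =>
    rw [ih, qExp_eq_one_add_mul_qExp hq0 hq1 (q ^ N * z), prod_range_succ,
      pow_succ', mul_assoc q]
    ring

theorem euler_q_Exponential (q z : ℝ) (hq0 : 0 < q) (hq1 : q < 1) :
    Summable (fun n : ℕ => q ^ (n * (n - 1) / 2) * z ^ n / qPoch q n) ∧
    ∑' n : ℕ, q ^ (n * (n - 1) / 2) * z ^ n / qPoch q n = ∏' k : ℕ, (1 + z * q ^ k) := by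
  have hterm : (fun n : ℕ => q ^ (n * (n - 1) / 2) * z ^ n / qPoch q n) =
      fun n => qExpCoeff q n * z ^ n := by
    funext n
    rw [qExpCoeff, div_mul_eq_mul_div, mul_div_right_comm]
  rw [hterm]
  refine ⟨summable_qExpCoeff_mul_pow hq0.le hq1 z, ?_⟩
  have hpow : Tendsto (fun N : ℕ => q ^ N) atTop (𝓝 0) :=
    tendsto_pow_atTop_nhds_zero_of_lt_one hq0.le hq1
  have hprod : Tendsto (fun N => ∏ k ∈ range N, (1 + z * q ^ k)) atTop
      (𝓝 (∏' k, (1 + z * q ^ k))) :=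
    (Real.multipliable_one_add_of_summable
      ((summable_geometric_of_lt_one hq0.le hq1).mul_left z)).tendsto_prod_tprod_nat
  have htail : Tendsto (fun N : ℕ => qExp q (q ^ N * z)) atTop (𝓝 1) := by
    simpa [Function.comp_def] using
      ((continuous_qExp hq0.le hq1).tendsto 0).comp (zero_mul z ▸ hpow.mul_const z)
  have hlim := hprod.mul htail
  simp_rw [← qExp_eq_prod_mul_qExp hq0.le hq1, mul_one] at hlim
  exact tendsto_nhds_unique tendsto_const_nhds hlim
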